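/- arXiv:1607.02205 — 2 statements merged into one kernel-verified Lean document; each statement's English description precedes it below -/
import Mathlib

section
/- For all real constants a₁, a₂, a₃, a₄, c₅, c₆, c₇, c₈, α, γ, K, σ, φ, the improper integral over t ∈ ℝ of e^{1+2c₅} e^{−t²/2} · [ 2u_Γ(t)·(a₁ u_Γ(t) v_Γ(t) − a₂ u_Γ(t)³ + a₃ u_Γ(t)) − ( −a₄ u_Γ(t)² − c₈ α u_Γ(t) + c₆ v_Γ(t) + c₇ + γ + K(cos(σt)cos φ − 1) ) ] dt equals e^{1+2c₅} √(2π) · ( a₁/8 − 3a₂/8 + a₃/2 + a₄/4 − a₁c₅/2 + c₅c₆ + c₆/4 − c₇ − γ − K(e^{−σ²/2} cos φ − 1) ). (This is the leading-order Melnikov integral d_{r₂²} for the low-frequency forcing regime.) -/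
/-!
Along `Γ` the integrand is `e^{1+2c₅}` times a quartic polynomial in `t` plus a multiple of
`cos (σ t)`, both against the Gaussian weight `e^{-t²/2}`. The odd moments of the weight vanish
by symmetry, integration by parts gives `∫ t^{n+2} e^{-b t²} = (n+1)/(2b) ∫ t^n e^{-b t²}`, and the
cosine term is the real part of the Fourier transform of the Gaussian.
-/

open MeasureTheory Real

/-- Heteroclinic parametrization `u_Γ(t) = -t/2`. -/
noncomputable def uGamma (t : ℝ) : ℝ := -t / 2

/-- Heteroclinic parametrization `v_Γ(t) = t²/4 - 1/2 - c₅`. -/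
noncomputable def vGamma (c₅ t : ℝ) : ℝ := t ^ 2 / 4 - 1 / 2 - c₅

theorem Function.Odd.integral_eq_zero {E : Type*} [NormedAddCommGroup E] [NormedSpace ℝ E]
    {f : ℝ → E} (hf : f.Odd) : ∫ t, f t = 0 := by
  have h := integral_neg_eq_self f volume
  simp only [show ∀ t, f (-t) = -f t from hf, integral_neg] at h
  have h2 : (2 : ℝ) • ∫ t, f t = 0 := by rw [two_smul]; nth_rw 1 [← h]; exact neg_add_cancel _
  exact (smul_eq_zero.mp h2).resolve_left two_ne_zero

section GaussianMoments

variable {b : ℝ}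

lemma integrable_pow_mul_exp_neg_mul_sq (hb : 0 < b) (n : ℕ) :
    Integrable fun t : ℝ => t ^ n * exp (-b * t ^ 2) := by
  simpa [rpow_natCast] using
    integrable_rpow_mul_exp_neg_mul_sq hb (by linarith [n.cast_nonneg (α := ℝ)] : (-1 : ℝ) < n)

lemma integrable_cos_mul_exp_neg_mul_sq (hb : 0 < b) (σ : ℝ) :
    Integrable fun t : ℝ => cos (σ * t) * exp (-b * t ^ 2) :=
  (integrable_exp_neg_mul_sq hb).bdd_mul (by fun_prop) (c := 1)
    (.of_forall fun t => by simpa using abs_cos_le_one (σ * t))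

lemma integrable_sum_pow_mul_exp_neg_mul_sq (hb : 0 < b) {N : ℕ} (c : Fin N → ℝ) :
    Integrable fun t : ℝ => (∑ i, c i * t ^ (i : ℕ)) * exp (-b * t ^ 2) := by
  simp_rw [Finset.sum_mul, mul_assoc]
  exact integrable_finsetSum _ fun i _ => (integrable_pow_mul_exp_neg_mul_sq hb i).const_mul (c i)

lemma integral_sum_pow_mul_exp_neg_mul_sq (hb : 0 < b) {N : ℕ} (c : Fin N → ℝ) :
    ∫ t : ℝ, (∑ i, c i * t ^ (i : ℕ)) * exp (-b * t ^ 2) =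
      ∑ i, c i * ∫ t : ℝ, t ^ (i : ℕ) * exp (-b * t ^ 2) := by
  simp_rw [Finset.sum_mul, mul_assoc]
  rw [integral_finsetSum _ fun (i : Fin N) _ =>
    (integrable_pow_mul_exp_neg_mul_sq hb i).const_mul (c i)]
  simp_rw [integral_const_mul]

lemma integral_pow_mul_exp_neg_mul_sq_of_odd {n : ℕ} (hn : Odd n) :
    ∫ t : ℝ, t ^ n * exp (-b * t ^ 2) = 0 :=
  Function.Odd.integral_eq_zero fun t => by rw [hn.neg_pow, neg_sq, neg_mul]

lemma hasDerivAt_exp_neg_mul_sq (t : ℝ) :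
    HasDerivAt (fun t : ℝ => exp (-b * t ^ 2)) (-(2 * b) * (t * exp (-b * t ^ 2))) t := by
  convert ((hasDerivAt_pow 2 t).const_mul (-b)).exp using 1
  ring

lemma integral_pow_add_two_mul_exp_neg_mul_sq (hb : 0 < b) (n : ℕ) :
    ∫ t : ℝ, t ^ (n + 2) * exp (-b * t ^ 2) =
      (n + 1) / (2 * b) * ∫ t : ℝ, t ^ n * exp (-b * t ^ 2) := by
  have hu (t : ℝ) : HasDerivAt (fun t : ℝ => t ^ (n + 1)) ((n + 1 : ℝ) * t ^ n) t := by
    simpa using hasDerivAt_pow (n + 1) t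
  have hv (t : ℝ) : HasDerivAt (fun t : ℝ => exp (-b * t ^ 2) / -(2 * b))
      (t * exp (-b * t ^ 2)) t := by
    refine ((hasDerivAt_exp_neg_mul_sq t).div_const _).congr_deriv ?_
    field_simp
  have hI (c : ℝ) (k : ℕ) := (integrable_pow_mul_exp_neg_mul_sq hb k).const_mul c
  have by_parts := integral_mul_deriv_eq_deriv_mul_of_integrable (fun t _ => hu t)
    (fun t _ => hv t) ((hI 1 (n + 2)).congr (.of_forall fun t => by simp only [Pi.mul_apply]; ring))
    ((hI (-(n + 1) / (2 * b)) n).congr (.of_forall fun t => by simp only [Pi.mul_apply]; ring))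
    ((hI (-1 / (2 * b)) (n + 1)).congr (.of_forall fun t => by simp only [Pi.mul_apply]; ring))
  calc ∫ t : ℝ, t ^ (n + 2) * exp (-b * t ^ 2)
      = ∫ t : ℝ, t ^ (n + 1) * (t * exp (-b * t ^ 2)) := by congr 1; ext t; ring
    _ = -∫ t : ℝ, (n + 1 : ℝ) * t ^ n * (exp (-b * t ^ 2) / -(2 * b)) := by_parts
    _ = ∫ t : ℝ, (n + 1) / (2 * b) * (t ^ n * exp (-b * t ^ 2)) := by
      rw [← integral_neg]; congr 1; ext t; ring
    _ = _ := integral_const_mul _ _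

lemma integral_sq_mul_exp_neg_mul_sq (hb : 0 < b) :
    ∫ t : ℝ, t ^ 2 * exp (-b * t ^ 2) = √(π / b) / (2 * b) := by
  simp only [integral_pow_add_two_mul_exp_neg_mul_sq hb 0, pow_zero, one_mul, integral_gaussian]
  ring

lemma integral_pow_four_mul_exp_neg_mul_sq (hb : 0 < b) :
    ∫ t : ℝ, t ^ 4 * exp (-b * t ^ 2) = 3 * √(π / b) / (4 * b ^ 2) := by
  rw [integral_pow_add_two_mul_exp_neg_mul_sq hb 2, integral_sq_mul_exp_neg_mul_sq hb]
  field_simp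
  norm_num

lemma integral_cos_mul_exp_neg_mul_sq (hb : 0 < b) (σ : ℝ) :
    ∫ t : ℝ, cos (σ * t) * exp (-b * t ^ 2) = √(π / b) * exp (-σ ^ 2 / (4 * b)) := by
  have hb' : 0 < (b : ℂ).re := by simpa using hb
  have hint : Integrable fun t : ℝ => Complex.exp (Complex.I * σ * t) * Complex.exp (-b * t ^ 2) :=
    (integrable_cexp_neg_mul_sq hb').bdd_mul (by fun_prop) (c := 1)
      (.of_forall fun t => by rw [mul_assoc, ← Complex.ofReal_mul, Complex.norm_exp_I_mul_ofReal])
  have hre (t : ℝ) : (Complex.exp (Complex.I * σ * t) * Complex.exp (-b * t ^ 2)).re =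
      cos (σ * t) * exp (-b * t ^ 2) := by
    rw [show Complex.I * σ * t = ((σ * t : ℝ) : ℂ) * Complex.I by push_cast; ring,
      show (-b * t ^ 2 : ℂ) = ((-b * t ^ 2 : ℝ) : ℂ) by push_cast; ring, ← Complex.ofReal_exp,
      Complex.re_mul_ofReal, Complex.exp_ofReal_mul_I_re]
  have hrhs : (π / b : ℂ) ^ (1 / 2 : ℂ) * Complex.exp (-σ ^ 2 / (4 * b)) =
      ((√(π / b) * exp (-σ ^ 2 / (4 * b)) : ℝ) : ℂ) := by
    rw [sqrt_eq_rpow, Complex.ofReal_mul, Complex.ofReal_cpow (by positivity), Complex.ofReal_exp]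
    push_cast
    rfl
  simpa only [RCLike.re_to_complex, hre, fourierIntegral_gaussian hb', hrhs, Complex.ofReal_re]
    using integral_re hint

end GaussianMoments

/-- The leading-order Melnikov integral `d_{r₂²}` for the low-frequency forcing regime. -/
theorem melnikov_low_frequency_leading_order
    (a₁ a₂ a₃ a₄ c₅ c₆ c₇ c₈ α γ K σ φ : ℝ) :
    (∫ t : ℝ,
      Real.exp (1 + 2 * c₅) * Real.exp (-t ^ 2 / 2) *
        (2 * uGamma t *
            (a₁ * uGamma t * vGamma c₅ t - a₂ * uGamma t ^ 3 + a₃ * uGamma t)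
          - (-a₄ * uGamma t ^ 2 - c₈ * α * uGamma t + c₆ * vGamma c₅ t + c₇ + γ
              + K * (Real.cos (σ * t) * Real.cos φ - 1))))
    = Real.exp (1 + 2 * c₅) * Real.sqrt (2 * Real.pi) *
        (a₁ / 8 - 3 * a₂ / 8 + a₃ / 2 + a₄ / 4 - a₁ * c₅ / 2 + c₅ * c₆ + c₆ / 4 - c₇ - γ
          - K * (Real.exp (-σ ^ 2 / 2) * Real.cos φ - 1)) := by
  have hb : (0 : ℝ) < 1 / 2 := by norm_num
  let c : Fin 5 → ℝ := ![c₆ / 2 + c₅ * c₆ - c₇ - γ + K, -(c₈ * α / 2),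
    -a₁ / 4 - a₁ * c₅ / 2 + a₃ / 2 + a₄ / 4 - c₆ / 4, 0, a₁ / 8 - a₂ / 8]
  calc _ = ∫ t : ℝ, exp (1 + 2 * c₅) * ((∑ i, c i * t ^ (i : ℕ)) * exp (-(1 / 2) * t ^ 2) -
          K * cos φ * (cos (σ * t) * exp (-(1 / 2) * t ^ 2))) := by
        congr 1; ext t
        simp only [Fin.sum_univ_five, c, Matrix.cons_val, Fin.coe_ofNat_eq_mod, Nat.reduceMod,
          uGamma, vGamma]
        rw [show -t ^ 2 / 2 = -(1 / 2) * t ^ 2 by ring]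
        ring
    _ = _ := by
      rw [integral_const_mul, integral_sub (integrable_sum_pow_mul_exp_neg_mul_sq hb c)
        ((integrable_cos_mul_exp_neg_mul_sq hb σ).const_mul _), integral_const_mul,
        integral_sum_pow_mul_exp_neg_mul_sq hb, integral_cos_mul_exp_neg_mul_sq hb]
      simp only [Fin.sum_univ_five, c, Matrix.cons_val, Fin.coe_ofNat_eq_mod, Nat.reduceMod,
        pow_zero, one_mul, integral_gaussian, integral_pow_mul_exp_neg_mul_sq_of_odd odd_one,
        integral_sq_mul_exp_neg_mul_sq hb, integral_pow_four_mul_exp_neg_mul_sq hb]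
      rw [show π / (1 / 2) = 2 * π by ring, show -σ ^ 2 / (4 * (1 / 2)) = -σ ^ 2 / 2 by ring]
      ring
end

section
/- For all real constants a₁, a₂, a₃, a₄, c₅, c₆, c₇, α, β, σ, θ₀, the improper integral over t ∈ ℝ of e^{1+2c₅} e^{−t²/2} · [ 2u_Γ(t)·(a₁ u_Γ(t) v_Γ(t) − a₂ u_Γ(t)³ + a₃ u_Γ(t)) − ( −a₄ u_Γ(t)² + α + c₆ v_Γ(t) + c₇ + β cos(σt + θ₀) ) ] dt equals e^{1+2c₅} √(2π) · ( a₁/8 − 3a₂/8 + a₃/2 + a₄/4 − a₁c₅/2 + c₅c₆ + c₆/4 − c₇ − α − β e^{−σ²/2} cos θ₀ ). (This is the leading-order Melnikov integral d_{r₂} for the intermediate-frequency forcing regime.) -/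
/-! Along `Γ` the integrand is `e^{1+2c₅} e^{-t²/2}` times an even quartic polynomial in `t` plus a
multiple of `cos (σ t + θ₀)`. Integration by parts gives the Gaussian moment recursion
`∫ t^{n+2} e^{-t²/2} = (n + 1) ∫ t^n e^{-t²/2}`, so the quartic contributes `√(2π)` times its
coefficients weighted by the moments `3, 1, 1`; the cosine term is the real part of the Fourier
transform of the Gaussian, `∫ e^{-t²/2 + i(σt + θ₀)} = √(2π) e^{-σ²/2 + iθ₀}`. -/

open MeasureTheory Real

lemma integrable_pow_mul_exp_neg_sq_div_two (n : ℕ) :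
    Integrable fun t : ℝ => t ^ n * exp (-t ^ 2 / 2) := by
  have h := integrable_rpow_mul_exp_neg_mul_sq (b := 1 / 2) (by norm_num)
    (s := n) (by linarith [(Nat.cast_nonneg n : (0 : ℝ) ≤ n)])
  simp only [rpow_natCast] at h
  convert h using 4 with t
  ring

lemma integrable_exp_neg_sq_div_two : Integrable fun t : ℝ => exp (-t ^ 2 / 2) := by
  simpa using integrable_pow_mul_exp_neg_sq_div_two 0

lemma hasDerivAt_pow_succ_mul_exp_neg_sq_div_two (n : ℕ) (t : ℝ) :
    HasDerivAt (fun t : ℝ => t ^ (n + 1) * exp (-t ^ 2 / 2))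
      ((n + 1) * (t ^ n * exp (-t ^ 2 / 2)) - t ^ (n + 2) * exp (-t ^ 2 / 2)) t := by
  have hexp : HasDerivAt (fun t : ℝ => exp (-t ^ 2 / 2)) (exp (-t ^ 2 / 2) * -t) t :=
    (((hasDerivAt_pow 2 t).neg.div_const 2).congr_deriv (by ring)).exp
  refine ((hasDerivAt_pow (n + 1) t).mul hexp).congr_deriv ?_
  rw [Nat.add_sub_cancel]
  push_cast
  ring

lemma integral_pow_add_two_mul_exp_neg_sq_div_two (n : ℕ) :
    ∫ t : ℝ, t ^ (n + 2) * exp (-t ^ 2 / 2) = (n + 1) * ∫ t : ℝ, t ^ n * exp (-t ^ 2 / 2) := by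
  have hzero := integral_eq_zero_of_hasDerivAt_of_integrable
    (hasDerivAt_pow_succ_mul_exp_neg_sq_div_two n)
    (((integrable_pow_mul_exp_neg_sq_div_two n).const_mul _).sub
      (integrable_pow_mul_exp_neg_sq_div_two (n + 2)))
    (integrable_pow_mul_exp_neg_sq_div_two (n + 1))
  rw [integral_sub ((integrable_pow_mul_exp_neg_sq_div_two n).const_mul _)
    (integrable_pow_mul_exp_neg_sq_div_two (n + 2)), integral_const_mul] at hzero
  linarith

lemma integral_exp_neg_sq_div_two : ∫ t : ℝ, exp (-t ^ 2 / 2) = √(2 * π) := by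
  convert integral_gaussian (1 / 2) using 1
  · congr 1 with t
    ring_nf
  · congr 1
    ring

lemma integral_sq_mul_exp_neg_sq_div_two : ∫ t : ℝ, t ^ 2 * exp (-t ^ 2 / 2) = √(2 * π) := by
  rw [integral_pow_add_two_mul_exp_neg_sq_div_two 0]
  simp only [pow_zero, one_mul, CharP.cast_eq_zero, zero_add, integral_exp_neg_sq_div_two]

lemma integral_pow_four_mul_exp_neg_sq_div_two :
    ∫ t : ℝ, t ^ 4 * exp (-t ^ 2 / 2) = 3 * √(2 * π) := by
  rw [integral_pow_add_two_mul_exp_neg_sq_div_two 2, integral_sq_mul_exp_neg_sq_div_two]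
  norm_num

lemma integrable_exp_neg_sq_div_two_mul_cos (σ θ : ℝ) :
    Integrable fun t : ℝ => exp (-t ^ 2 / 2) * cos (σ * t + θ) :=
  integrable_exp_neg_sq_div_two.mul_bdd (by fun_prop)
    (ae_of_all _ fun t => by simpa only [norm_eq_abs] using abs_cos_le_one (σ * t + θ))

lemma Complex.exp_ofReal_add_ofReal_mul_I_re (a b : ℝ) :
    (exp (a + b * I)).re = Real.exp a * Real.cos b := by
  simp [Complex.exp_re]

lemma integral_exp_neg_sq_div_two_mul_cos (σ θ : ℝ) :
    ∫ t : ℝ, exp (-t ^ 2 / 2) * cos (σ * t + θ) = √(2 * π) * exp (-σ ^ 2 / 2) * cos θ := by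
  have hb : (-(1 / 2 : ℂ)).re < 0 := by norm_num
  have hintegrandExponent (t : ℝ) : -(1 / 2) * (t : ℂ) ^ 2 + σ * Complex.I * t + θ * Complex.I
      = ((-t ^ 2 / 2 : ℝ) : ℂ) + ((σ * t + θ : ℝ) : ℂ) * Complex.I := by
    push_cast
    ring
  have hsqrt : ((π : ℂ) / -(-(1 / 2))) ^ (1 / 2 : ℂ) = ((√(2 * π) : ℝ) : ℂ) := by
    rw [show (π : ℂ) / -(-(1 / 2)) = ((2 * π : ℝ) : ℂ) by push_cast; ring, sqrt_eq_rpow,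
      Complex.ofReal_cpow (by positivity)]
    norm_num
  have hvalueExponent : θ * Complex.I - (σ * Complex.I) ^ 2 / (4 * -(1 / 2))
      = ((-σ ^ 2 / 2 : ℝ) : ℂ) + (θ : ℂ) * Complex.I := by
    rw [mul_pow, Complex.I_sq]
    push_cast
    ring
  calc ∫ t : ℝ, exp (-t ^ 2 / 2) * cos (σ * t + θ)
      = (∫ t : ℝ, Complex.exp (-(1 / 2) * (t : ℂ) ^ 2 + σ * Complex.I * t + θ * Complex.I)).re := by
        refine Eq.trans ?_ (integral_re (integrable_cexp_quadratic' hb _ _))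
        congr 1 with t
        rw [hintegrandExponent, RCLike.re_to_complex, Complex.exp_ofReal_add_ofReal_mul_I_re]
    _ = √(2 * π) * exp (-σ ^ 2 / 2) * cos θ := by
        rw [integral_cexp_quadratic hb, hsqrt, hvalueExponent, Complex.re_ofReal_mul,
          Complex.exp_ofReal_add_ofReal_mul_I_re]
        ring

lemma integral_quartic_add_cos_mul_exp_neg_sq_div_two (A B C D σ θ : ℝ) :
    ∫ t : ℝ, (A * t ^ 4 + B * t ^ 2 + C + D * cos (σ * t + θ)) * exp (-t ^ 2 / 2)
      = √(2 * π) * (3 * A + B + C + D * exp (-σ ^ 2 / 2) * cos θ) := by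
  have h4 := (integrable_pow_mul_exp_neg_sq_div_two 4).const_mul A
  have h2 := (integrable_pow_mul_exp_neg_sq_div_two 2).const_mul B
  have h0 := integrable_exp_neg_sq_div_two.const_mul C
  have hcos := (integrable_exp_neg_sq_div_two_mul_cos σ θ).const_mul D
  have hsplit : ∀ t : ℝ, (A * t ^ 4 + B * t ^ 2 + C + D * cos (σ * t + θ)) * exp (-t ^ 2 / 2)
      = A * (t ^ 4 * exp (-t ^ 2 / 2)) + B * (t ^ 2 * exp (-t ^ 2 / 2))
        + C * exp (-t ^ 2 / 2) + D * (exp (-t ^ 2 / 2) * cos (σ * t + θ)) := fun t => by ring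
  simp_rw [hsplit]
  rw [integral_add (by exact (h4.add h2).add h0) hcos, integral_add (by exact h4.add h2) h0,
    integral_add h4 h2]
  simp only [integral_const_mul, integral_pow_four_mul_exp_neg_sq_div_two,
    integral_sq_mul_exp_neg_sq_div_two, integral_exp_neg_sq_div_two,
    integral_exp_neg_sq_div_two_mul_cos]
  ring

/-- The leading-order Melnikov integral `d_{r₂}` for the intermediate-frequency
forcing regime. -/
theorem melnikov_intermediate_frequency_leading_order
    (a₁ a₂ a₃ a₄ c₅ c₆ c₇ α β σ θ₀ : ℝ) :
    (∫ t : ℝ,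
      Real.exp (1 + 2 * c₅) * Real.exp (-t ^ 2 / 2) *
        (2 * uGamma t *
            (a₁ * uGamma t * vGamma c₅ t - a₂ * uGamma t ^ 3 + a₃ * uGamma t)
          - (-a₄ * uGamma t ^ 2 + α + c₆ * vGamma c₅ t + c₇
              + β * Real.cos (σ * t + θ₀))))
    = Real.exp (1 + 2 * c₅) * Real.sqrt (2 * Real.pi) *
        (a₁ / 8 - 3 * a₂ / 8 + a₃ / 2 + a₄ / 4 - a₁ * c₅ / 2 + c₅ * c₆ + c₆ / 4 - c₇ - α
          - β * Real.exp (-σ ^ 2 / 2) * Real.cos θ₀) := by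
  have hintegrand : ∀ t : ℝ,
      exp (1 + 2 * c₅) * exp (-t ^ 2 / 2) *
        (2 * uGamma t * (a₁ * uGamma t * vGamma c₅ t - a₂ * uGamma t ^ 3 + a₃ * uGamma t)
          - (-a₄ * uGamma t ^ 2 + α + c₆ * vGamma c₅ t + c₇ + β * cos (σ * t + θ₀)))
      = exp (1 + 2 * c₅) *
          (((a₁ - a₂) / 8 * t ^ 4 + (a₃ / 2 + a₄ / 4 - a₁ / 4 - a₁ * c₅ / 2 - c₆ / 4) * t ^ 2
            + (c₆ / 2 + c₅ * c₆ - α - c₇) + -β * cos (σ * t + θ₀)) * exp (-t ^ 2 / 2)) := by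
    intro t
    simp only [uGamma, vGamma]
    ring
  simp_rw [hintegrand, integral_const_mul, integral_quartic_add_cos_mul_exp_neg_sq_div_two]
  ring
end
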